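/- Let A ∈ ℝ^{n×n} with splitting A = M − N where M is invertible, let B ∈ ℝ^{n×n}, b ∈ ℝⁿ, θ ∈ [0,1), and let Ω ∈ ℝ^{n×n} be such that Ω + M is invertible. Suppose F(x*) = 0 and ‖M^{-1}‖ < 1/[θ(‖Ω+M‖ + ‖Ω+N‖ + ‖B‖) + ‖Ω+N‖ + ‖B‖ + ‖Ω‖]. Then any sequence {x^k} in ℝⁿ satisfying ‖(Ω+M)x^{k+1} − [(Ω+N)x^k + B|x^k| + b]‖ ≤ θ‖F(x^k)‖ for all k ≥ 0 converges linearly to x* from any starting point x^0. -/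

import Mathlib

open Matrix Filter

/-- Componentwise absolute value of a vector in Euclidean space. -/
noncomputable def vabs {n : ℕ} (x : EuclideanSpace ℝ (Fin n)) : EuclideanSpace ℝ (Fin n) :=
  WithLp.toLp 2 (fun i => |x i|)

/-- A matrix acting on Euclidean space (so that vector norms are the Euclidean 2-norm). -/
noncomputable def mulV {n : ℕ} (M : Matrix (Fin n) (Fin n) ℝ) (x : EuclideanSpace ℝ (Fin n)) :
    EuclideanSpace ℝ (Fin n) :=
  Matrix.toEuclideanCLM (𝕜 := ℝ) M x

/-- Spectral norm of a real matrix: the operator norm induced by the Euclidean vector norm. -/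
noncomputable def spec {n : ℕ} (M : Matrix (Fin n) (Fin n) ℝ) : ℝ :=
  ‖Matrix.toEuclideanCLM (𝕜 := ℝ) M‖

/-- The GAVE residual function `F(x) = A x − B |x| − b`. -/
noncomputable def gaveF {n : ℕ} (A B : Matrix (Fin n) (Fin n) ℝ)
    (b : EuclideanSpace ℝ (Fin n)) (x : EuclideanSpace ℝ (Fin n)) : EuclideanSpace ℝ (Fin n) :=
  mulV A x - mulV B (vabs x) - b

/-- The AVE residual function `A x − |x| − b` (the GAVE with `B = I`). -/
noncomputable def aveF {n : ℕ} (A : Matrix (Fin n) (Fin n) ℝ)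
    (b : EuclideanSpace ℝ (Fin n)) (x : EuclideanSpace ℝ (Fin n)) : EuclideanSpace ℝ (Fin n) :=
  mulV A x - vabs x - b

/-- A sequence converges linearly to `xs`: the distances to `xs` contract by a fixed
factor `c < 1` at every step, and the sequence tends to `xs`. -/
def ConvergesLinearlyTo {n : ℕ} (x : ℕ → EuclideanSpace ℝ (Fin n))
    (xs : EuclideanSpace ℝ (Fin n)) : Prop :=
  (∃ c : ℝ, 0 ≤ c ∧ c < 1 ∧ ∀ k : ℕ, ‖x (k + 1) - xs‖ ≤ c * ‖x k - xs‖) ∧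
    Tendsto x atTop (nhds xs)

/-
With `e = x - x*` and `r` the inexactness residual of the inner solve, `F(x*) = 0` turns the
iteration into `M e⁺ = (Ω+N) e + B(|x| - |x*|) + r - Ω e⁺`. Since `|·|` is 1-Lipschitz and
`A = (Ω+M) - (Ω+N)`, we get `‖r‖ ≤ θ‖F(x)‖ ≤ θ(‖Ω+M‖ + ‖Ω+N‖ + ‖B‖)‖e‖`, hence
`(1 - ‖M⁻¹‖‖Ω‖)‖e⁺‖ ≤ ‖M⁻¹‖ D ‖e‖` with `D = θ(‖Ω+M‖ + ‖Ω+N‖ + ‖B‖) + ‖Ω+N‖ + ‖B‖`.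
The hypothesis on `‖M⁻¹‖` says `‖M⁻¹‖(D + ‖Ω‖) < 1`, which makes this a contraction.
-/

theorem ConvergesLinearlyTo.of_contraction {n : ℕ} {x : ℕ → EuclideanSpace ℝ (Fin n)}
    {xs : EuclideanSpace ℝ (Fin n)} {c : ℝ} (hc0 : 0 ≤ c) (hc1 : c < 1)
    (h : ∀ k, ‖x (k + 1) - xs‖ ≤ c * ‖x k - xs‖) : ConvergesLinearlyTo x xs := by
  refine ⟨⟨c, hc0, hc1, h⟩, ?_⟩
  have hgeom : Tendsto (fun k ↦ c ^ k * ‖x 0 - xs‖) atTop (nhds 0) := by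
    simpa using (tendsto_pow_atTop_nhds_zero_of_lt_one hc0 hc1).mul_const ‖x 0 - xs‖
  rw [tendsto_iff_norm_sub_tendsto_zero]
  exact squeeze_zero (fun _ ↦ norm_nonneg _)
    (fun k ↦ le_geom (u := fun k ↦ ‖x k - xs‖) hc0 k fun j _ ↦ h j) hgeom

section MatrixAction

variable {n : ℕ}

lemma spec_nonneg (P : Matrix (Fin n) (Fin n) ℝ) : 0 ≤ spec P := norm_nonneg _

lemma norm_mulV_le (P : Matrix (Fin n) (Fin n) ℝ) (x : EuclideanSpace ℝ (Fin n)) :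
    ‖mulV P x‖ ≤ spec P * ‖x‖ :=
  (Matrix.toEuclideanCLM (𝕜 := ℝ) P).le_opNorm x

lemma spec_sub_le (P Q : Matrix (Fin n) (Fin n) ℝ) : spec (P - Q) ≤ spec P + spec Q := by
  simpa only [spec, map_sub] using norm_sub_le _ _

lemma mulV_add (P Q : Matrix (Fin n) (Fin n) ℝ) (x : EuclideanSpace ℝ (Fin n)) :
    mulV (P + Q) x = mulV P x + mulV Q x := by
  simp only [mulV, map_add, _root_.add_apply]

lemma mulV_sub (P Q : Matrix (Fin n) (Fin n) ℝ) (x : EuclideanSpace ℝ (Fin n)) :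
    mulV (P - Q) x = mulV P x - mulV Q x := by
  simp only [mulV, map_sub, _root_.sub_apply]

lemma mulV_sub_right (P : Matrix (Fin n) (Fin n) ℝ) (x y : EuclideanSpace ℝ (Fin n)) :
    mulV P (x - y) = mulV P x - mulV P y :=
  map_sub _ _ _

lemma mulV_inv_mulV {P : Matrix (Fin n) (Fin n) ℝ} (hP : IsUnit P)
    (x : EuclideanSpace ℝ (Fin n)) : mulV P⁻¹ (mulV P x) = x := by
  have hinv : P⁻¹ * P = 1 := Matrix.nonsing_inv_mul P ((Matrix.isUnit_iff_isUnit_det P).mp hP)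
  rw [mulV, mulV, ← mul_apply_eq_comp, ← map_mul, hinv, map_one,
    one_apply_eq_self]

lemma norm_vabs_sub_vabs_le (x y : EuclideanSpace ℝ (Fin n)) :
    ‖vabs x - vabs y‖ ≤ ‖x - y‖ := by
  rw [EuclideanSpace.norm_eq, EuclideanSpace.norm_eq]
  gcongr with i
  exact abs_abs_sub_abs_le_abs_sub (x i) (y i)

end MatrixAction

section GAVE

variable {n : ℕ} {A M N B Ω : Matrix (Fin n) (Fin n) ℝ} {b : EuclideanSpace ℝ (Fin n)}

noncomputable def inmsResidual (Ω M N B : Matrix (Fin n) (Fin n) ℝ)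
    (b y y' : EuclideanSpace ℝ (Fin n)) : EuclideanSpace ℝ (Fin n) :=
  mulV (Ω + M) y' - (mulV (Ω + N) y + mulV B (vabs y) + b)

lemma gaveF_sub_gaveF (y z : EuclideanSpace ℝ (Fin n)) :
    gaveF A B b y - gaveF A B b z = mulV A (y - z) - mulV B (vabs y - vabs z) := by
  simp only [gaveF, mulV_sub_right]
  abel

lemma norm_gaveF_le_of_root {xs : EuclideanSpace ℝ (Fin n)} (hxs : gaveF A B b xs = 0)
    (y : EuclideanSpace ℝ (Fin n)) : ‖gaveF A B b y‖ ≤ (spec A + spec B) * ‖y - xs‖ := by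
  rw [← sub_zero (gaveF A B b y), ← hxs, gaveF_sub_gaveF]
  calc ‖mulV A (y - xs) - mulV B (vabs y - vabs xs)‖
      ≤ spec A * ‖y - xs‖ + spec B * ‖vabs y - vabs xs‖ :=
        (norm_sub_le _ _).trans (add_le_add (norm_mulV_le _ _) (norm_mulV_le _ _))
    _ ≤ spec A * ‖y - xs‖ + spec B * ‖y - xs‖ := by
        gcongr
        · exact spec_nonneg B
        · exact norm_vabs_sub_vabs_le y xs
    _ = (spec A + spec B) * ‖y - xs‖ := by ring

lemma mulV_inms_error_eq (hA : A = M - N) {xs : EuclideanSpace ℝ (Fin n)}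
    (hxs : gaveF A B b xs = 0) (y y' : EuclideanSpace ℝ (Fin n)) :
    mulV M (y' - xs) = mulV (Ω + N) (y - xs) + mulV B (vabs y - vabs xs)
      + inmsResidual Ω M N B b y y' - mulV Ω (y' - xs) := by
  have hMxs : mulV M xs = mulV N xs + mulV B (vabs xs) + b := by
    rw [gaveF, hA, mulV_sub] at hxs
    rw [← sub_eq_zero, ← hxs]
    abel
  simp only [inmsResidual, mulV_sub_right, mulV_add, hMxs]
  abel

theorem inms_step_error_le (hA : A = M - N) (hM : IsUnit M) {θ : ℝ} (hθ0 : 0 ≤ θ)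
    {xs : EuclideanSpace ℝ (Fin n)} (hxs : gaveF A B b xs = 0)
    {y y' : EuclideanSpace ℝ (Fin n)}
    (hres : ‖inmsResidual Ω M N B b y y'‖ ≤ θ * ‖gaveF A B b y‖) :
    (1 - spec M⁻¹ * spec Ω) * ‖y' - xs‖ ≤
      spec M⁻¹ * (θ * (spec (Ω + M) + spec (Ω + N) + spec B) + spec (Ω + N) + spec B)
        * ‖y - xs‖ := by
  have hAsplit : spec A ≤ spec (Ω + M) + spec (Ω + N) := by
    simpa only [hA, add_sub_add_left_eq_sub] using spec_sub_le (Ω + M) (Ω + N)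
  have hres' : ‖inmsResidual Ω M N B b y y'‖
      ≤ θ * (spec (Ω + M) + spec (Ω + N) + spec B) * ‖y - xs‖ := by
    calc _ ≤ θ * ‖gaveF A B b y‖ := hres
      _ ≤ θ * ((spec A + spec B) * ‖y - xs‖) := by gcongr; exact norm_gaveF_le_of_root hxs y
      _ ≤ θ * ((spec (Ω + M) + spec (Ω + N) + spec B) * ‖y - xs‖) := by gcongr
      _ = _ := by ring
  have hrhs : ‖mulV M (y' - xs)‖ ≤ (θ * (spec (Ω + M) + spec (Ω + N) + spec B)
      + spec (Ω + N) + spec B) * ‖y - xs‖ + spec Ω * ‖y' - xs‖ := by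
    rw [mulV_inms_error_eq hA hxs y y']
    have hN := norm_mulV_le (Ω + N) (y - xs)
    have hB := (norm_mulV_le B (vabs y - vabs xs)).trans
      (mul_le_mul_of_nonneg_left (norm_vabs_sub_vabs_le y xs) (spec_nonneg B))
    have hΩ := norm_mulV_le Ω (y' - xs)
    have := norm_sub_le_of_le (norm_add₃_le.trans (add_le_add_three hN hB hres')) hΩ
    linarith
  have hinv : ‖y' - xs‖ ≤ spec M⁻¹ * ‖mulV M (y' - xs)‖ := by
    simpa only [mulV_inv_mulV hM] using norm_mulV_le M⁻¹ (mulV M (y' - xs))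
  nlinarith [mul_le_mul_of_nonneg_left hrhs (spec_nonneg M⁻¹)]

end GAVE

lemma contraction_factor_lt_one {α D w : ℝ} (hα : 0 ≤ α) (hD : 0 ≤ D) (hw : 0 ≤ w)
    (h : α < 1 / (D + w)) : 0 < 1 - α * w ∧ α * D / (1 - α * w) < 1 := by
  have hpos : 0 < D + w := by
    by_contra! hle
    have : D + w = 0 := le_antisymm hle (add_nonneg hD hw)
    rw [this, div_zero] at h
    linarith
  have hlt : α * (D + w) < 1 := (lt_div_iff₀ hpos).mp h
  have hden : 0 < 1 - α * w := by nlinarith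
  exact ⟨hden, (div_lt_one hden).mpr (by linarith)⟩

theorem stmt3_general {n : ℕ} (A M N B Ω : Matrix (Fin n) (Fin n) ℝ)
    (b : EuclideanSpace ℝ (Fin n)) (hA : A = M - N) (hM : IsUnit M) (θ : ℝ)
    (hθ0 : 0 ≤ θ)
    (xs : EuclideanSpace ℝ (Fin n)) (hxs : gaveF A B b xs = 0)
    (hcond : spec M⁻¹ <
      1 / (θ * (spec (Ω + M) + spec (Ω + N) + spec B) + spec (Ω + N) + spec B + spec Ω))
    (x : ℕ → EuclideanSpace ℝ (Fin n))
    (hx : ∀ k : ℕ, ‖mulV (Ω + M) (x (k + 1)) - (mulV (Ω + N) (x k) + mulV B (vabs (x k)) + b)‖ ≤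
      θ * ‖gaveF A B b (x k)‖) :
    ConvergesLinearlyTo x xs := by
  set D := θ * (spec (Ω + M) + spec (Ω + N) + spec B) + spec (Ω + N) + spec B
  have hD : 0 ≤ D := by
    have := spec_nonneg (Ω + M)
    have := spec_nonneg (Ω + N)
    have := spec_nonneg B
    positivity
  obtain ⟨hden, hc1⟩ := contraction_factor_lt_one (spec_nonneg M⁻¹) hD (spec_nonneg Ω) hcond
  refine .of_contraction (div_nonneg (mul_nonneg (spec_nonneg _) hD) hden.le) hc1 fun k ↦ ?_
  rw [div_mul_eq_mul_div, le_div_iff₀ hden, mul_comm]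
  exact inms_step_error_le hA hM hθ0 hxs (hx k)

theorem stmt3 {n : ℕ} (A M N B Ω : Matrix (Fin n) (Fin n) ℝ)
    (b : EuclideanSpace ℝ (Fin n)) (hA : A = M - N) (hM : IsUnit M) (θ : ℝ)
    (hθ0 : 0 ≤ θ) (hθ1 : θ < 1) (hinv : IsUnit (Ω + M))
    (xs : EuclideanSpace ℝ (Fin n)) (hxs : gaveF A B b xs = 0)
    (hcond : spec M⁻¹ <
      1 / (θ * (spec (Ω + M) + spec (Ω + N) + spec B) + spec (Ω + N) + spec B + spec Ω))
    (x : ℕ → EuclideanSpace ℝ (Fin n))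
    (hx : ∀ k : ℕ, ‖mulV (Ω + M) (x (k + 1)) - (mulV (Ω + N) (x k) + mulV B (vabs (x k)) + b)‖ ≤
      θ * ‖gaveF A B b (x k)‖) :
    ConvergesLinearlyTo x xs :=
  stmt3_general A M N B Ω b hA hM θ hθ0 xs hxs hcond x hx
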